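/- arXiv:2201.03633 — 4 statements merged into one kernel-verified Lean document; each statement's English description precedes it below -/
import Mathlib

section
/- Let G be a simple graph and let 𝒯 be a collection of triangles of G (3-element sets of pairwise adjacent vertices) such that every edge of G is contained in exactly one triangle of 𝒯. Suppose there is a map m : 𝒯 → V(G) with m(T) ∈ T for every T ∈ 𝒯 (the 'marked angle' of T), such that for every vertex v the number of triangles T ∈ 𝒯 with v ∈ T and m(T) ≠ v is at most 2. Then col_ve(G) ≤ 4. -/
namespace VEGame

open Classical


variable {V : Type*}

/-- The set of vertices marked after Alice's first `r` moves. -/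
def mVerts (a : ℕ → V) (r : ℕ) : Set V := {v | ∃ i < r, a i = v}

/-- The set of edges marked after Bob's first `r` moves. -/
def mEdges (b : ℕ → Sym2 V) (r : ℕ) : Set (Sym2 V) := {e | ∃ i < r, b i = e}

/-- Alice's sequence of moves is legal: whenever an unmarked vertex remains, she
marks a previously unmarked vertex.  (If no unmarked vertex remains the game has
ended; the remaining values of `a` are irrelevant, as they do not change the set
of marked vertices.) -/
def AliceLegal (a : ℕ → V) : Prop :=
  ∀ r, (∃ v, v ∉ mVerts a r) → a r ∉ mVerts a r

/-- Bob's sequence of moves is legal: whenever an unmarked edge of `G` remains,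
he marks a previously unmarked edge of `G`. -/
def BobLegal (G : SimpleGraph V) (b : ℕ → Sym2 V) : Prop :=
  ∀ r, (∃ e ∈ G.edgeSet, e ∉ mEdges b r) → b r ∈ G.edgeSet ∧ b r ∉ mEdges b r

/-- The score of vertex `v` at the end of round `r` (rounds are numbered from 0):
`0` if `v` is marked, and otherwise the number of marked edges incident to `v`. -/
noncomputable def score (G : SimpleGraph V) (a : ℕ → V) (b : ℕ → Sym2 V)
    (r : ℕ) (v : V) : ℕ∞ :=
  if v ∈ mVerts a (r + 1) then 0
  else {e | e ∈ G.edgeSet ∧ v ∈ e ∧ e ∈ mEdges b (r + 1)}.encard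

/-- `a` is the sequence of Alice's moves when she follows strategy `A`
(a function of the history, i.e. of Bob's moves so far). -/
def ConsistentA (A : List (Sym2 V) → V) (a : ℕ → V) (b : ℕ → Sym2 V) : Prop :=
  ∀ r, a r = A (List.ofFn fun i : Fin r => b i)

/-- `b` is the sequence of Bob's moves when he follows strategy `B`
(a function of the history, i.e. of Alice's moves so far). -/
def ConsistentB (B : List V → Sym2 V) (a : ℕ → V) (b : ℕ → Sym2 V) : Prop :=
  ∀ r, b r = B (List.ofFn fun i : Fin (r + 1) => a i)

/-- Bob has a winning strategy for score `s`: a legal strategy which, against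
every legal play of Alice, forces some round and some vertex to have score at
least `s`. -/
def BobWins (G : SimpleGraph V) (s : ℕ) : Prop :=
  ∃ B : List V → Sym2 V,
    (∀ a b, ConsistentB B a b → AliceLegal a → BobLegal G b) ∧
    (∀ a b, ConsistentB B a b → AliceLegal a →
      ∃ r v, (s : ℕ∞) ≤ score G a b r v)

/-- The vertex-edge coloring number of `G`: one plus the supremum of all scores
for which Bob has a winning strategy. -/
noncomputable def colVE (G : SimpleGraph V) : ℕ∞ :=
  (⨆ s ∈ {s : ℕ | BobWins G s}, (s : ℕ∞)) + 1

end VEGame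

open VEGame

/-!
Alice keeps the following invariant on every triangle `T = {s, p, q}` of `𝒯` with marked angle
`s`: if an edge of `T` is marked then so is `s`; if both edges of `T` at `p` are marked then so is
`p` (likewise for `q`); and if both edges at `s` are marked but `pq` is not, then `p` or `q` is
marked. A new edge lies in exactly one triangle of `𝒯`, so only that triangle's invariant is at
stake, and Alice restores it by marking a suitable vertex of it. Under the invariant an unmarked
vertex `v` carries no marked edge of a triangle whose marked angle is `v` and at most one of each
of the at most two other triangles through it, so at most two marked edges after Alice's move
and at most three after Bob's: the score never reaches `4`.
-/

namespace Finset

variable {α : Type*}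

lemma exists_mem_ne_ne_of_card_eq_three {T : Finset α} (h3 : T.card = 3) (x y : α) :
    ∃ z ∈ T, z ≠ x ∧ z ≠ y := by
  classical
  obtain ⟨z, hz, hzxy⟩ := exists_mem_notMem_of_card_lt_card (s := {x, y}) (t := T)
    (h3 ▸ card_le_two.trans_lt (by norm_num))
  simp only [mem_insert, mem_singleton, not_or] at hzxy
  exact ⟨z, hz, hzxy⟩

lemma eq_or_eq_or_eq_of_card_eq_three {T : Finset α} (h3 : T.card = 3) {x y z w : α}
    (hx : x ∈ T) (hy : y ∈ T) (hz : z ∈ T) (hxy : x ≠ y) (hxz : x ≠ z) (hyz : y ≠ z)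
    (hw : w ∈ T) : w = x ∨ w = y ∨ w = z := by
  classical
  have hT : {x, y, z} = T := eq_of_subset_of_card_le (by simp [insert_subset_iff, *])
    (by rw [h3, card_eq_three.mpr ⟨x, y, z, hxy, hxz, hyz, rfl⟩])
  simpa [← hT] using hw

end Finset

namespace VEGame

variable {V : Type*}

section Play

lemma mVerts_zero (a : ℕ → V) : mVerts a 0 = ∅ := by
  simp [mVerts]

lemma mVerts_succ (a : ℕ → V) (r : ℕ) : mVerts a (r + 1) = insert (a r) (mVerts a r) := by
  ext v
  simp [mVerts, Nat.le_iff_lt_or_eq, or_and_right, exists_or, eq_comm, or_comm]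

lemma mEdges_zero (b : ℕ → Sym2 V) : mEdges b 0 = ∅ := by
  simp [mEdges]

lemma mEdges_succ (b : ℕ → Sym2 V) (r : ℕ) : mEdges b (r + 1) = insert (b r) (mEdges b r) := by
  ext e
  simp [mEdges, Nat.le_iff_lt_or_eq, or_and_right, exists_or, eq_comm, or_comm]

lemma mEdges_congr {b b' : ℕ → Sym2 V} {r : ℕ} (h : ∀ i < r, b i = b' i) :
    mEdges b r = mEdges b' r := by
  ext e
  exact exists_congr fun i => and_congr_right fun hi => by rw [h i hi]

lemma mVerts_eq_setOf_mem_ofFn (a : ℕ → V) (n : ℕ) :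
    mVerts a n = {v | v ∈ List.ofFn fun i : Fin n => a i} := by
  ext v
  simp [mVerts, List.mem_ofFn, Fin.exists_iff]

lemma take_ofFn_coe (a : ℕ → V) {k n : ℕ} (h : k ≤ n) :
    (List.ofFn fun i : Fin n => a i).take k = List.ofFn fun i : Fin k => a i := by
  apply List.ext_getElem
  · simp [h]
  · intro i _ _
    simp [List.getElem_take]

lemma exists_seq_eq_step (step : List V → V) :
    ∃ a : ℕ → V, ∀ n, a n = step (List.ofFn fun i : Fin n => a i) :=
  ⟨fun n => Nat.strongRec (fun n ih => step (List.ofFn fun i : Fin n => ih i i.isLt)) n,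
    fun _ => Nat.strongRec_eq _ _⟩

lemma exists_play (B : List V → Sym2 V) (respond : Set V → Set (Sym2 V) → Sym2 V → V) :
    ∃ a b, ConsistentB B a b ∧
      ∀ r, a (r + 1) = respond (mVerts a (r + 1)) (mEdges b r) (b r) := by
  obtain ⟨a, ha⟩ := exists_seq_eq_step fun l =>
    respond {v | v ∈ l} (mEdges (fun i => B (l.take (i + 1))) (l.length - 1)) (B l)
  refine ⟨a, fun r => B (List.ofFn fun i : Fin (r + 1) => a i), fun r => rfl, fun r => ?_⟩
  rw [ha, mVerts_eq_setOf_mem_ofFn, List.length_ofFn, Nat.add_sub_cancel]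
  congr 1
  exact mEdges_congr fun i hi => by rw [take_ofFn_coe a (by omega)]

lemma score_le_add_one {G : SimpleGraph V} {a : ℕ → V} {b : ℕ → Sym2 V} {r : ℕ} {v : V}
    {k : ℕ∞}
    (h : v ∉ mVerts a (r + 1) → {e | e ∈ G.edgeSet ∧ v ∈ e ∧ e ∈ mEdges b r}.encard ≤ k) :
    score G a b r v ≤ k + 1 := by
  unfold score
  split_ifs with hv
  · exact zero_le
  calc {e | e ∈ G.edgeSet ∧ v ∈ e ∧ e ∈ mEdges b (r + 1)}.encard
      ≤ (insert (b r) {e | e ∈ G.edgeSet ∧ v ∈ e ∧ e ∈ mEdges b r}).encard := by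
        refine Set.encard_mono fun e ⟨heG, hve, he⟩ => ?_
        rw [mEdges_succ] at he
        exact he.imp id fun he => ⟨heG, hve, he⟩
    _ ≤ {e | e ∈ G.edgeSet ∧ v ∈ e ∧ e ∈ mEdges b r}.encard + 1 := Set.encard_insert_le _ _
    _ ≤ k + 1 := add_le_add_left (h hv) 1

lemma colVE_le_of_forall_bobWins_le {G : SimpleGraph V} {n : ℕ}
    (h : ∀ s, BobWins G s → s ≤ n) : colVE G ≤ n + 1 := by
  unfold colVE
  gcongr
  exact iSup₂_le fun s hs => by exact_mod_cast h s hs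

variable (Inv : Set V → Set (Sym2 V) → Prop)

lemma exists_legal_response [Nonempty V] (mono : ∀ F, Monotone (Inv · F))
    (step : ∀ {M F} (e : Sym2 V), Inv M F → ∃ v, Inv (insert v M) (insert e F))
    (M : Set V) (F : Set (Sym2 V)) (e : Sym2 V) :
    ∃ v, ((∃ x, x ∉ M) → v ∉ M) ∧ (Inv M F → Inv (insert v M) (insert e F)) := by
  obtain ⟨v, hv⟩ : ∃ v, Inv M F → Inv (insert v M) (insert e F) := by
    by_cases hI : Inv M F
    · exact (step e hI).imp fun _ hv _ => hv
    · exact ⟨Classical.arbitrary V, fun h => absurd h hI⟩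
  by_cases hlegal : (∃ x, x ∉ M) → v ∉ M
  · exact ⟨v, hlegal, hv⟩
  obtain ⟨⟨x, hx⟩, hvM⟩ := Classical.not_imp.mp hlegal
  refine ⟨x, fun _ => hx, fun hI => mono _ ?_ (hv hI)⟩
  rw [Set.insert_eq_of_mem (not_not.mp hvM)]
  exact Set.subset_insert x M

theorem colVE_le_of_invariant (G : SimpleGraph V) (k : ℕ) (empty : Inv ∅ ∅)
    (mono : ∀ F, Monotone (Inv · F))
    (step : ∀ {M F} (e : Sym2 V), Inv M F → ∃ v, Inv (insert v M) (insert e F))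
    (bound : ∀ {M F v}, Inv M F → v ∉ M → {e | e ∈ G.edgeSet ∧ v ∈ e ∧ e ∈ F}.encard ≤ k) :
    colVE G ≤ k + 2 := by
  suffices h : ∀ s, BobWins G s → s ≤ k + 1 by
    have := colVE_le_of_forall_bobWins_le h
    rwa [Nat.cast_add, Nat.cast_one, add_assoc, one_add_one_eq_two] at this
  rintro s ⟨B, -, hwin⟩
  have : Nonempty V := Sym2.ind (fun x _ => ⟨x⟩) (B [])
  choose pick hpick_legal hpick_inv using exists_legal_response Inv mono step
  obtain ⟨a, b, hab, ha⟩ := exists_play B pick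
  have hinv : ∀ r, Inv (mVerts a (r + 1)) (mEdges b r) := by
    intro r
    induction r with
    | zero =>
      rw [mEdges_zero]
      exact mono ∅ (Set.empty_subset _) empty
    | succ r ih =>
      rw [mVerts_succ, mEdges_succ, ha]
      exact hpick_inv _ _ _ ih
  have hlegal : AliceLegal a := by
    rintro (_ | r) hfree
    · simp [mVerts_zero]
    · rw [ha]
      exact hpick_legal _ _ _ hfree
  obtain ⟨r, v, hs⟩ := hwin a b hab hlegal
  have := hs.trans (score_le_add_one fun hv => bound (hinv r) hv)
  exact_mod_cast this

end Play

section AngleMarking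

/-- Alice's invariant on a triangle with marked angle `s` and further vertices `p`, `q`, where
`Ms`, `Mp`, `Mq` say which vertices are marked and `Fsp`, `Fsq`, `Fpq` which edges are. The last
clause looks one move ahead: once both legs at `s` are marked, Bob's marking of the base must find
`p` or `q` marked already, since Alice can then mark only one of them. -/
def LocalInv (Ms Mp Mq Fsp Fsq Fpq : Prop) : Prop :=
  (Fsp ∨ Fsq ∨ Fpq → Ms) ∧ (Fsp ∧ Fpq → Mp) ∧ (Fsq ∧ Fpq → Mq) ∧ (Fsp ∧ Fsq → Fpq ∨ Mp ∨ Mq)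

namespace LocalInv

variable {Ms Mp Mq Ms' Mp' Mq' Fsp Fsq Fpq : Prop}

lemma mono (hs : Ms → Ms') (hp : Mp → Mp') (hq : Mq → Mq') (h : LocalInv Ms Mp Mq Fsp Fsq Fpq) :
    LocalInv Ms' Mp' Mq' Fsp Fsq Fpq := by
  unfold LocalInv at *
  tauto

lemma swap (h : LocalInv Ms Mp Mq Fsp Fsq Fpq) : LocalInv Ms Mq Mp Fsq Fsp Fpq := by
  unfold LocalInv at *
  tauto

lemma respond_leg (h : LocalInv Ms Mp Mq Fsp Fsq Fpq) :
    LocalInv True Mp Mq True Fsq Fpq ∨ LocalInv Ms True Mq True Fsq Fpq := by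
  unfold LocalInv at *
  tauto

lemma respond_base (h : LocalInv Ms Mp Mq Fsp Fsq Fpq) :
    LocalInv True Mp Mq Fsp Fsq True ∨ LocalInv Ms True Mq Fsp Fsq True ∨
      LocalInv Ms Mp True Fsp Fsq True := by
  obtain ⟨h₁, h₂, -, h₄⟩ := h
  by_cases hs : Ms
  · by_cases hp : Fsp ∧ ¬Mp
    · refine Or.inr <| Or.inl ⟨fun _ => hs, fun _ => trivial, fun ⟨hsq, _⟩ => ?_,
        fun _ => Or.inl trivial⟩
      rcases h₄ ⟨hp.1, hsq⟩ with hpq | hmp | hmq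
      exacts [absurd (h₂ ⟨hp.1, hpq⟩) hp.2, absurd hmp hp.2, hmq]
    · exact Or.inr <| Or.inr ⟨fun _ => hs, fun ⟨hsp, _⟩ => by_contra fun hmp => hp ⟨hsp, hmp⟩,
        fun _ => trivial, fun _ => Or.inl trivial⟩
  · exact Or.inl ⟨fun _ => trivial, fun h => absurd (h₁ (Or.inl h.1)) hs,
      fun h => absurd (h₁ (Or.inr (Or.inl h.1))) hs, fun _ => Or.inl trivial⟩

end LocalInv

def TriangleInv (m : Finset V → V) (M : Set V) (F : Set (Sym2 V)) (T : Finset V) : Prop :=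
  ∀ p ∈ T, ∀ q ∈ T, p ≠ q → p ≠ m T → q ≠ m T →
    LocalInv (m T ∈ M) (p ∈ M) (q ∈ M) (s(m T, p) ∈ F) (s(m T, q) ∈ F) (s(p, q) ∈ F)

def MarkingInv (𝒯 : Set (Finset V)) (m : Finset V → V) (M : Set V) (F : Set (Sym2 V)) : Prop :=
  ∀ T ∈ 𝒯, TriangleInv m M F T

variable {m : Finset V → V} {M M' : Set V} {F : Set (Sym2 V)} {T : Finset V}

lemma triangleInv_iff (h3 : T.card = 3) (hmT : m T ∈ T) {p q : V} (hp : p ∈ T) (hq : q ∈ T)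
    (hpq : p ≠ q) (hps : p ≠ m T) (hqs : q ≠ m T) :
    TriangleInv m M F T ↔
      LocalInv (m T ∈ M) (p ∈ M) (q ∈ M) (s(m T, p) ∈ F) (s(m T, q) ∈ F) (s(p, q) ∈ F) := by
  refine ⟨fun h => h p hp q hq hpq hps hqs, fun h p' hp' q' hq' hpq' hps' hqs' => ?_⟩
  have hmem {w} (hw : w ∈ T) : w = m T ∨ w = p ∨ w = q :=
    Finset.eq_or_eq_or_eq_of_card_eq_three h3 hmT hp hq hps.symm hqs.symm hpq hw
  rcases hmem hp' with rfl | rfl | rfl <;> rcases hmem hq' with rfl | rfl | rfl <;>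
    first | exact h | simpa only [Sym2.eq_swap] using h.swap | simp_all

namespace TriangleInv

lemma mono (hMM' : M ⊆ M') (h : TriangleInv m M F T) : TriangleInv m M' F T :=
  fun p hp q hq hpq hps hqs => (h p hp q hq hpq hps hqs).mono (@hMM' _) (@hMM' _) (@hMM' _)

lemma insert_edge {e : Sym2 V} (hmT : m T ∈ T) (he : ∀ x ∈ T, ∀ y ∈ T, x ≠ y → s(x, y) ≠ e)
    (h : TriangleInv m M F T) : TriangleInv m M (insert e F) T := by
  intro p hp q hq hpq hps hqs
  simp only [Set.mem_insert_iff, he _ hmT _ hp hps.symm, he _ hmT _ hq hqs.symm, he _ hp _ hq hpq,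
    false_or]
  exact h p hp q hq hpq hps hqs

lemma exists_insert_leg (h3 : T.card = 3) (hmT : m T ∈ T) {p q : V} (hp : p ∈ T) (hq : q ∈ T)
    (hpq : p ≠ q) (hps : p ≠ m T) (hqs : q ≠ m T) (h : TriangleInv m M F T) :
    ∃ v, TriangleInv m (insert v M) (insert s(m T, p) F) T := by
  have hiff {M F} := triangleInv_iff (M := M) (F := F) h3 hmT hp hq hpq hps hqs
  rcases (hiff.1 h).respond_leg with h' | h' <;>
    [refine ⟨m T, hiff.2 ?_⟩; refine ⟨p, hiff.2 ?_⟩] <;>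
    simpa [hps, hps.symm, hqs, hqs.symm, hpq, hpq.symm, Sym2.eq_iff] using h'

lemma exists_insert_base (h3 : T.card = 3) (hmT : m T ∈ T) {p q : V} (hp : p ∈ T) (hq : q ∈ T)
    (hpq : p ≠ q) (hps : p ≠ m T) (hqs : q ≠ m T) (h : TriangleInv m M F T) :
    ∃ v, TriangleInv m (insert v M) (insert s(p, q) F) T := by
  have hiff {M F} := triangleInv_iff (M := M) (F := F) h3 hmT hp hq hpq hps hqs
  rcases (hiff.1 h).respond_base with h' | h' | h' <;>
    [refine ⟨m T, hiff.2 ?_⟩; refine ⟨p, hiff.2 ?_⟩; refine ⟨q, hiff.2 ?_⟩] <;>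
    simpa [hps, hps.symm, hqs, hqs.symm, hpq, hpq.symm, Sym2.eq_iff] using h'

lemma exists_insert (h3 : T.card = 3) (hmT : m T ∈ T) {x y : V} (hx : x ∈ T) (hy : y ∈ T)
    (hxy : x ≠ y) (h : TriangleInv m M F T) :
    ∃ v, TriangleInv m (insert v M) (insert s(x, y) F) T := by
  obtain rfl | hxs := eq_or_ne x (m T)
  · obtain ⟨z, hz, hzs, hzy⟩ := Finset.exists_mem_ne_ne_of_card_eq_three h3 (m T) y
    exact h.exists_insert_leg h3 hmT hy hz hzy.symm hxy.symm hzs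
  obtain rfl | hys := eq_or_ne y (m T)
  · obtain ⟨z, hz, hzs, hzx⟩ := Finset.exists_mem_ne_ne_of_card_eq_three h3 (m T) x
    rw [Sym2.eq_swap]
    exact h.exists_insert_leg h3 hmT hx hz hzx.symm hxs hzs
  exact h.exists_insert_base h3 hmT hx hy hxy hxs hys

lemma apex_ne (h3 : T.card = 3) (h : TriangleInv m M F T) {v x : V} (hv : v ∉ M) (hx : x ∈ T)
    (hxv : x ≠ v) (hF : s(v, x) ∈ F) : m T ≠ v := by
  rintro rfl
  obtain ⟨z, hz, hzs, hzx⟩ := Finset.exists_mem_ne_ne_of_card_eq_three h3 (m T) x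
  exact hv ((h x hx z hz hzx.symm hxv hzs).1 (Or.inl hF))

lemma eq_of_marked (h3 : T.card = 3) (hmT : m T ∈ T) (h : TriangleInv m M F T) {v x y : V}
    (hv : v ∉ M) (hvT : v ∈ T) (hx : x ∈ T) (hy : y ∈ T) (hxv : x ≠ v) (hyv : y ≠ v)
    (hFx : s(v, x) ∈ F) (hFy : s(v, y) ∈ F) : x = y := by
  have hmv := h.apex_ne h3 hv hx hxv hFx
  by_contra hxy
  rcases Finset.eq_or_eq_or_eq_of_card_eq_three h3 hvT hx hy hxv.symm hyv.symm hxy hmT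
    with hs | hs | hs
  · exact hmv hs
  · refine hv ((h v hvT y hy hyv.symm hmv.symm (hs ▸ Ne.symm hxy)).2.1 ⟨?_, hFy⟩)
    rwa [hs, Sym2.eq_swap]
  · refine hv ((h v hvT x hx hxv.symm hmv.symm (hs ▸ hxy)).2.1 ⟨?_, hFx⟩)
    rwa [hs, Sym2.eq_swap]

end TriangleInv

namespace MarkingInv

variable {G : SimpleGraph V} {𝒯 : Set (Finset V)}

lemma empty : MarkingInv 𝒯 m ∅ ∅ :=
  fun _ _ _ _ _ _ _ _ _ => by simp [LocalInv]

lemma mono (hMM' : M ⊆ M') (h : MarkingInv 𝒯 m M F) : MarkingInv 𝒯 m M' F :=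
  fun T hT => (h T hT).mono hMM'

lemma exists_insert (htri : ∀ T ∈ 𝒯, T.card = 3 ∧ ∀ x ∈ T, ∀ y ∈ T, x ≠ y → G.Adj x y)
    (hedge : ∀ e ∈ G.edgeSet, ∃! T, T ∈ 𝒯 ∧ ∀ x ∈ e, x ∈ T) (hm : ∀ T ∈ 𝒯, m T ∈ T)
    (h : MarkingInv 𝒯 m M F) (e : Sym2 V) : ∃ v, MarkingInv 𝒯 m (insert v M) (insert e F) := by
  induction e using Sym2.ind with | _ x y => ?_
  by_cases hxy : G.Adj x y
  · obtain ⟨T₀, ⟨hT₀, hxyT₀⟩, huniq⟩ := hedge s(x, y) hxy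
    obtain ⟨v, hv⟩ := (h T₀ hT₀).exists_insert (htri T₀ hT₀).1 (hm T₀ hT₀)
      (hxyT₀ x (Sym2.mem_mk_left x y)) (hxyT₀ y (Sym2.mem_mk_right x y)) hxy.ne
    refine ⟨v, fun T hT => ?_⟩
    obtain rfl | hne := eq_or_ne T T₀
    · exact hv
    refine ((h T hT).mono (Set.subset_insert v M)).insert_edge (hm T hT)
      fun a ha b hb _ hab => hne (huniq T ⟨hT, ?_⟩)
    rw [← hab]
    simp [ha, hb]
  · refine ⟨x, fun T hT => ((h T hT).mono (Set.subset_insert x M)).insert_edge (hm T hT)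
      fun a ha b hb hab he => hxy ?_⟩
    rw [← SimpleGraph.mem_edgeSet, ← he]
    exact (htri T hT).2 a ha b hb hab

lemma encard_incident_le (h3 : ∀ T ∈ 𝒯, T.card = 3)
    (hcover : ∀ e ∈ G.edgeSet, ∃ T ∈ 𝒯, ∀ x ∈ e, x ∈ T) (hm : ∀ T ∈ 𝒯, m T ∈ T)
    (hcount : ∀ v : V, {T | T ∈ 𝒯 ∧ v ∈ T ∧ m T ≠ v}.encard ≤ 2)
    (h : MarkingInv 𝒯 m M F) {v : V} (hv : v ∉ M) :
    {e | e ∈ G.edgeSet ∧ v ∈ e ∧ e ∈ F}.encard ≤ 2 := by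
  choose! t ht𝒯 hte using hcover
  refine le_trans (Set.encard_le_encard_of_injOn (f := t) ?_ ?_) (hcount v)
  · rintro e ⟨heG, hve, heF⟩
    obtain ⟨x, rfl⟩ := Sym2.mem_iff_exists.mp hve
    refine ⟨ht𝒯 _ heG, hte _ heG v hve, ?_⟩
    exact (h _ (ht𝒯 _ heG)).apex_ne (h3 _ (ht𝒯 _ heG)) hv (hte _ heG x (Sym2.mem_mk_right v x))
      (G.mem_edgeSet.mp heG).ne.symm heF
  · rintro e₁ ⟨he₁G, hve₁, he₁F⟩ e₂ ⟨he₂G, hve₂, he₂F⟩ ht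
    obtain ⟨x, rfl⟩ := Sym2.mem_iff_exists.mp hve₁
    obtain ⟨y, rfl⟩ := Sym2.mem_iff_exists.mp hve₂
    have hT := ht𝒯 _ he₁G
    have hyT : y ∈ t s(v, x) := ht ▸ hte _ he₂G y (Sym2.mem_mk_right v y)
    rw [(h _ hT).eq_of_marked (h3 _ hT) (hm _ hT) hv (hte _ he₁G v hve₁)
      (hte _ he₁G x (Sym2.mem_mk_right v x)) hyT (G.mem_edgeSet.mp he₁G).ne.symm
      (G.mem_edgeSet.mp he₂G).ne.symm he₁F he₂F]

end MarkingInv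

end AngleMarking

end VEGame

/-- **Main Theorem.** Let `G` be a simple graph and `𝒯` a collection of triangles of `G`
(3-element sets of pairwise adjacent vertices) such that every edge of `G` is contained in
exactly one triangle of `𝒯`.  Suppose `m : 𝒯 → V(G)` picks a vertex ("marked angle")
`m T ∈ T` of each triangle `T ∈ 𝒯` in such a way that every vertex `v` lies in at most two
triangles of `𝒯` whose marked angle is not `v`.  Then `col_ve(G) ≤ 4`. -/
theorem colVE_le_four_of_angle_marking {V : Type*} (G : SimpleGraph V)
    (𝒯 : Set (Finset V))
    (htri : ∀ T ∈ 𝒯, T.card = 3 ∧ ∀ x ∈ T, ∀ y ∈ T, x ≠ y → G.Adj x y)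
    (hedge : ∀ e ∈ G.edgeSet, ∃! T, T ∈ 𝒯 ∧ ∀ x ∈ e, x ∈ T)
    (m : Finset V → V)
    (hm : ∀ T ∈ 𝒯, m T ∈ T)
    (hcount : ∀ v : V, {T | T ∈ 𝒯 ∧ v ∈ T ∧ m T ≠ v}.encard ≤ 2) :
    colVE G ≤ 4 := by
  have h := colVE_le_of_invariant (MarkingInv 𝒯 m) G 2 MarkingInv.empty
    (fun _ _ _ hMM' h => h.mono hMM') (fun e h => h.exists_insert htri hedge hm e)
    (fun h hv => h.encard_incident_le (fun T hT => (htri T hT).1)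
      (fun e he => (hedge e he).exists) hm hcount hv)
  exact h.trans (by norm_num)
end

section
/- Let n ∈ ℕ, let G′ = (V′,E′) be a simple graph, let V ⊆ V′, and let G be the subgraph of G′ induced on V. Suppose that (i) every vertex of V′ ∖ V has degree strictly less than n in G′; (ii) col_ve(G) = n; and (iii) Alice has a strategy in the vertex-edge marking game on G such that, in every play in which she follows it, at the end of each of her turns every unmarked vertex of G is incident to at most n−2 marked edges. Then col_ve(G′) = n. -/
open VEGame

/-- Alice has a strategy in the vertex-edge marking game on `G` such that, in every play
in which she follows it, at the end of each of her turns every unmarked vertex of `G` is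
incident to at most `n - 2` marked edges. -/
def AliceKeepsBelow {V : Type*} (G : SimpleGraph V) (n : ℕ) : Prop :=
  ∃ A : List (Sym2 V) → V,
    (∀ a b, ConsistentA A a b → BobLegal G b → AliceLegal a) ∧
    (∀ a b, ConsistentA A a b → BobLegal G b → ∀ (r : ℕ) (v : V),
      v ∉ mVerts a (r + 1) →
      {e | e ∈ G.edgeSet ∧ v ∈ e ∧ e ∈ mEdges b r}.encard ≤ ((n - 2 : ℕ) : ℕ∞))

/-!
Bob lifts a winning strategy from `G` to `G'` by simulation: each move of Alice outside `V`, or on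
a vertex already marked in the simulated game on `G`, is replaced there by an unmarked vertex of
`V`, and Bob plays his simulated answer whenever it is a legal move. Every real marked vertex of
`V` is marked in the simulation and every simulated marked edge is marked in the real game, so the
real scores dominate the simulated ones.

Conversely, Alice plays her strategy on `G` against the sequence of Bob's moves that are new edges
of `G`, and answers an edge from an unmarked `x ∈ V` to `V' ∖ V` by marking `x`. After Bob's move
in any round, an unmarked vertex of `V` then lies on at most `n - 2` marked edges of `G` (her
guarantee at the end of her last simulated turn) plus Bob's last edge, while a vertex outside `V`
has fewer than `n` edges altogether; so Bob cannot reach score `n`. This count fails for `n = 1`,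
but then neither `G` nor `G'` has an edge.
-/

namespace VEGame

open Classical

section Generic

variable {α V W : Type*}

theorem mem_ofFn_iff (a : ℕ → α) (r : ℕ) (x : α) :
    x ∈ (List.ofFn fun i : Fin r => a i) ↔ ∃ i < r, a i = x := by
  simp only [List.mem_ofFn]
  exact ⟨fun ⟨i, h⟩ => ⟨i, i.2, h⟩, fun ⟨i, hi, h⟩ => ⟨⟨i, hi⟩, h⟩⟩

theorem ofFn_succ_eq_append (a : ℕ → α) (r : ℕ) :
    (List.ofFn fun i : Fin (r + 1) => a i) = (List.ofFn fun i : Fin r => a i) ++ [a r] := by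
  rw [List.ofFn_succ', List.concat_eq_append]
  rfl

theorem take_ofFn (a : ℕ → α) {m n : ℕ} (h : m ≤ n) :
    (List.ofFn fun i : Fin n => a i).take m = List.ofFn fun i : Fin m => a i := by
  apply List.ext_getElem <;> simp [h]

theorem mVerts_mono (a : ℕ → α) : Monotone (mVerts a) :=
  fun _ _ h _ ⟨i, hi, hx⟩ => ⟨i, hi.trans_le h, hx⟩

theorem mEdges_mono (b : ℕ → Sym2 V) : Monotone (mEdges b) :=
  mVerts_mono b

theorem encard_incident_le (G : SimpleGraph V) (v : V) (S : Set (Sym2 V)) :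
    {e | e ∈ G.edgeSet ∧ v ∈ e ∧ e ∈ S}.encard ≤ (G.neighborSet v).encard := by
  rw [← Set.encard_congr (G.incidenceSetEquivNeighborSet v)]
  exact Set.encard_le_encard fun e he => ⟨he.1, he.2.1⟩

noncomputable def choosePreferring (S : Set α) (x : α) : α :=
  if x ∈ S then x else @Classical.epsilon α ⟨x⟩ (· ∈ S)

theorem choosePreferring_of_mem {S : Set α} {x : α} (h : x ∈ S) : choosePreferring S x = x :=
  if_pos h

theorem choosePreferring_mem {S : Set α} (x : α) (h : S.Nonempty) :
    choosePreferring S x ∈ S := by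
  unfold choosePreferring
  split_ifs with hx
  · exact hx
  · exact Classical.epsilon_spec h

theorem aliceLegal_of_eq_choosePreferring {a : ℕ → V} (p : ℕ → V)
    (h : ∀ r, a r = choosePreferring {x | x ∉ List.ofFn fun i : Fin r => a i} (p r)) :
    AliceLegal a := by
  rintro r ⟨v, hv⟩
  rw [h r]
  have hfresh : ∀ x, x ∉ mVerts a r ↔ x ∉ List.ofFn fun i : Fin r => a i :=
    fun x => (mem_ofFn_iff a r x).not.symm
  exact (hfresh _).2 (choosePreferring_mem (S := {x | x ∉ List.ofFn fun i : Fin r => a i})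
    (p r) ⟨v, (hfresh v).1 hv⟩)

theorem bobLegal_of_eq_choosePreferring {G : SimpleGraph V} {b : ℕ → Sym2 V}
    (q : ℕ → Sym2 V)
    (h : ∀ r, b r =
      choosePreferring {e | e ∈ G.edgeSet ∧ e ∉ List.ofFn fun i : Fin r => b i} (q r)) :
    BobLegal G b := by
  rintro r ⟨e, he, he'⟩
  rw [h r]
  have hfresh : ∀ f, f ∉ mEdges b r ↔ f ∉ List.ofFn fun i : Fin r => b i :=
    fun f => (mem_ofFn_iff b r f).not.symm
  obtain ⟨h1, h2⟩ := choosePreferring_mem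
    (S := {e | e ∈ G.edgeSet ∧ e ∉ List.ofFn fun i : Fin r => b i}) (q r)
    ⟨e, he, (hfresh e).1 he'⟩
  exact ⟨h1, (hfresh _).2 h2⟩

noncomputable def play (σ : List V → List (Sym2 V) → V) (B : List V → Sym2 V) (r : ℕ) :
    V × Sym2 V :=
  let xs := List.ofFn fun i : Fin r => (play σ B i).1
  let x := σ xs (List.ofFn fun i : Fin r => (play σ B i).2)
  (x, B (xs ++ [x]))

def FollowsRule (σ : List V → List (Sym2 V) → V) (a : ℕ → V) (b : ℕ → Sym2 V) : Prop :=
  ∀ r, a r = σ (List.ofFn fun i : Fin r => a i) (List.ofFn fun i : Fin r => b i)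

section Play

variable (σ : List V → List (Sym2 V) → V) (B : List V → Sym2 V)

theorem followsRule_play : FollowsRule σ (fun r => (play σ B r).1) (fun r => (play σ B r).2) :=
  fun r => by dsimp only; rw [play]

theorem consistentB_play : ConsistentB B (fun r => (play σ B r).1) (fun r => (play σ B r).2) :=
  fun r => by
    have h := followsRule_play σ B r
    dsimp only at h ⊢
    rw [ofFn_succ_eq_append (fun i => (play σ B i).1), h, play]

end Play

theorem exists_aliceLegal_play [Nonempty V] (B : List V → Sym2 V) :
    ∃ a b, ConsistentB B a b ∧ AliceLegal a :=
  let σ : List V → List (Sym2 V) → V :=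
    fun xs _ => choosePreferring {x | x ∉ xs} (Classical.arbitrary V)
  ⟨_, _, consistentB_play σ B, aliceLegal_of_eq_choosePreferring _ (followsRule_play σ B)⟩

-- Bob's own earlier moves are recomputed from the prefixes of Alice's moves.
noncomputable def bobOfRule (τ : List V → List (Sym2 V) → Sym2 V) (xs : List V) : Sym2 V :=
  τ xs (List.ofFn fun i : Fin (xs.length - 1) => bobOfRule τ (xs.take (i + 1)))
termination_by xs.length
decreasing_by simp; omega

theorem ConsistentB.eq_rule {τ : List V → List (Sym2 V) → Sym2 V} {a : ℕ → V}
    {b : ℕ → Sym2 V} (h : ConsistentB (bobOfRule τ) a b) (r : ℕ) :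
    b r = τ (List.ofFn fun i : Fin (r + 1) => a i) (List.ofFn fun i : Fin r => b i) := by
  rw [h r, bobOfRule]
  congr 1
  apply List.ext_getElem
  · simp
  · intro i _ hi
    simp only [List.getElem_ofFn]
    rw [take_ofFn a (by simp at hi; omega), h i]

theorem exists_bobLegal_extending [Nonempty V] {G : SimpleGraph V}
    {L : ℕ → List (Sym2 V)} (hL : ∀ r, L r <+: L (r + 1)) (hnd : ∀ r, (L r).Nodup)
    (hE : ∀ r, ∀ e ∈ L r, e ∈ G.edgeSet) :
    ∃ vb : ℕ → Sym2 V, BobLegal G vb ∧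
      ∀ r, (List.ofFn fun i : Fin (L r).length => vb i) = L r := by
  have hmono : ∀ {r₁ r₂}, r₁ ≤ r₂ → L r₁ <+: L r₂ := fun h =>
    Nat.le_induction (List.prefix_refl _) (fun r _ ih => ih.trans (hL r)) _ h
  have hent : ∀ j, ∃ e, ∀ r (h : j < (L r).length), (L r)[j] = e := by
    intro j
    by_cases hj : ∃ r, j < (L r).length
    · obtain ⟨r₀, h₀⟩ := hj
      refine ⟨(L r₀)[j], fun r h => ?_⟩
      rcases le_total r r₀ with hr | hr
      · exact (hmono hr).getElem h
      · exact ((hmono hr).getElem h₀).symm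
    · exact ⟨s(Classical.arbitrary V, Classical.arbitrary V), fun r h => absurd ⟨r, h⟩ hj⟩
  choose ent hent using hent
  -- `vb` copies the chain as long as it grows, and afterwards plays any fresh edge
  let τ : List V → List (Sym2 V) → Sym2 V :=
    fun _ es => choosePreferring {e | e ∈ G.edgeSet ∧ e ∉ es} (ent es.length)
  let vb : ℕ → Sym2 V :=
    fun r => bobOfRule τ (List.ofFn fun _ : Fin (r + 1) => Classical.arbitrary V)
  have hvb : ∀ r, vb r =
      choosePreferring {e | e ∈ G.edgeSet ∧ e ∉ List.ofFn fun i : Fin r => vb i} (ent r) := by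
    intro r
    simpa [τ] using
      ConsistentB.eq_rule (τ := τ) (a := fun _ => Classical.arbitrary V) (b := vb)
        (fun _ => rfl) r
  refine ⟨vb, bobLegal_of_eq_choosePreferring ent hvb, fun r => ?_⟩
  have key : ∀ j (h : j < (L r).length), vb j = (L r)[j] := by
    intro j
    induction j using Nat.strong_induction_on with
    | _ j ih =>
      intro h
      have hpre : (List.ofFn fun i : Fin j => vb i) = (L r).take j :=
        List.ext_getElem (by simp; omega) fun i h₁ _ => by
          simp only [List.length_ofFn] at h₁
          simp [ih i h₁ (by omega)]
      rw [hvb, ← hent j r h, hpre]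
      refine choosePreferring_of_mem ⟨hE r _ (List.getElem_mem _), ?_⟩
      rw [List.mem_take_iff_getElem]
      rintro ⟨i, hi, hij⟩
      have := ((hnd r).getElem_inj_iff).1 hij
      omega
  exact List.ext_getElem (by simp) fun j _ h => by simp [key j h]

theorem BobWins.mono {G : SimpleGraph V} {s t : ℕ} (h : BobWins G t) (hst : s ≤ t) :
    BobWins G s := by
  obtain ⟨B, hleg, hwin⟩ := h
  refine ⟨B, hleg, fun a b hab ha => ?_⟩
  obtain ⟨r, v, hv⟩ := hwin a b hab ha
  exact ⟨r, v, le_trans (by exact_mod_cast hst) hv⟩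

theorem colVE_ne_zero (G : SimpleGraph V) : colVE G ≠ 0 := by
  simp [colVE]

theorem bobWins_iff_lt_colVE {G : SimpleGraph V} {s : ℕ} (hs : s ≠ 0) :
    BobWins G s ↔ (s : ℕ∞) < colVE G := by
  rw [colVE, ENat.natCast_lt_add_one_iff]
  refine ⟨le_iSup₂ (f := fun (t : ℕ) (_ : t ∈ {t | BobWins G t}) => (t : ℕ∞)) s, fun h => ?_⟩
  have hlt : ((s - 1 : ℕ) : ℕ∞) < ⨆ t ∈ {t | BobWins G t}, (t : ℕ∞) :=
    lt_of_lt_of_le (by exact_mod_cast Nat.sub_one_lt hs) h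
  obtain ⟨t, ht, hst⟩ := lt_biSup_iff.1 hlt
  norm_cast at hst
  exact ht.mono (by omega)

theorem iSup_bobWins_le {G : SimpleGraph V} {H : SimpleGraph W}
    (h : ∀ s ≠ 0, BobWins G s → BobWins H s) :
    ⨆ s ∈ {s | BobWins G s}, (s : ℕ∞) ≤ ⨆ s ∈ {s | BobWins H s}, (s : ℕ∞) := by
  refine iSup₂_le fun s hs => ?_
  rcases eq_or_ne s 0 with rfl | hs0
  · simp
  · exact le_iSup₂ (f := fun (t : ℕ) (_ : t ∈ {t | BobWins H t}) => (t : ℕ∞)) s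
      (h s hs0 hs)

theorem colVE_congr {G : SimpleGraph V} {H : SimpleGraph W}
    (h : ∀ s ≠ 0, BobWins G s ↔ BobWins H s) : colVE G = colVE H := by
  rw [colVE, colVE, le_antisymm (iSup_bobWins_le fun s hs => (h s hs).1)
    (iSup_bobWins_le fun s hs => (h s hs).2)]

theorem BobWins.le_of_forall_exists_play {G : SimpleGraph V} {s m : ℕ}
    (hA : ∀ B : List V → Sym2 V, ∃ a b, ConsistentB B a b ∧ AliceLegal a ∧
      ∀ r v, score G a b r v ≤ m)
    (h : BobWins G s) : s ≤ m := by
  obtain ⟨B, -, hB⟩ := h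
  obtain ⟨a, b, hab, ha, hm⟩ := hA B
  obtain ⟨r, v, hv⟩ := hB a b hab ha
  exact_mod_cast hv.trans (hm r v)

theorem BobWins.eq_zero_of_edgeSet_eq_empty {G : SimpleGraph V} {s : ℕ} (hG : G.edgeSet = ∅)
    (h : BobWins G s) : s = 0 := by
  have : Nonempty V := ⟨(h.choose []).out.1⟩
  refine Nat.le_zero.1 (h.le_of_forall_exists_play fun B => ?_)
  obtain ⟨a, b, hab, ha⟩ := exists_aliceLegal_play B
  refine ⟨a, b, hab, ha, fun r v => ?_⟩
  unfold score
  split_ifs <;> simp [hG]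

theorem bobWins_one {G : SimpleGraph V} (hG : G.edgeSet.Nonempty) : BobWins G 1 := by
  let τ : List V → List (Sym2 V) → Sym2 V :=
    fun _ es => choosePreferring {e | e ∈ G.edgeSet ∧ e ∉ es} hG.some
  refine ⟨bobOfRule τ, fun a b hab _ => bobLegal_of_eq_choosePreferring _ hab.eq_rule,
    fun a b hab _ => ?_⟩
  have hb0 : b 0 ∈ G.edgeSet := by
    rw [hab.eq_rule 0]
    exact (choosePreferring_mem (S := {e | e ∈ G.edgeSet ∧ e ∉ []}) _
      ⟨hG.some, hG.some_mem, List.not_mem_nil⟩).1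
  obtain ⟨x, hx, hxa⟩ : ∃ x ∈ b 0, x ≠ a 0 := by
    by_cases h : a 0 ∈ b 0
    · exact ⟨Sym2.Mem.other h, Sym2.other_mem h, G.edge_other_ne hb0 h⟩
    · exact ⟨(b 0).out.1, Sym2.out_fst_mem _, fun he => h (he ▸ Sym2.out_fst_mem _)⟩
  have hxm : x ∉ mVerts a 1 := by
    rintro ⟨i, hi, rfl⟩
    exact hxa (by rw [Nat.lt_one_iff.1 hi])
  refine ⟨0, x, ?_⟩
  rw [score, if_neg hxm]
  exact Set.one_le_encard_iff_nonempty.2 ⟨b 0, hb0, hx, 0, zero_lt_one, rfl⟩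

end Generic

variable {V' : Type*} {G' : SimpleGraph V'} {V : Set V'}

theorem edgeSet_eq_empty_of_induce (hout : ∀ v ∉ V, G'.neighborSet v = ∅)
    (h : (G'.induce V).edgeSet = ∅) : G'.edgeSet = ∅ := by
  refine Set.eq_empty_of_forall_notMem fun e he => ?_
  induction e using Sym2.ind with
  | _ x y =>
    have hmem : ∀ {u w}, G'.Adj u w → u ∈ V := fun {u w} huw => by
      by_contra hu
      exact (hout u hu).subset huw
    have hxy : s((⟨x, hmem he⟩ : V), ⟨y, hmem he.symm⟩) ∈ (G'.induce V).edgeSet := he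
    simp [h] at hxy

theorem score_induce_le {a : ℕ → V'} {b : ℕ → Sym2 V'} {va : ℕ → V}
    {vb : ℕ → Sym2 V} {r : ℕ} {v : V}
    (hv : (v : V') ∈ mVerts a (r + 1) → v ∈ mVerts va (r + 1))
    (hE : ∀ e ∈ (G'.induce V).edgeSet, e ∈ mEdges vb (r + 1) →
      e.map Subtype.val ∈ mEdges b (r + 1)) :
    score (G'.induce V) va vb r v ≤ score G' a b r v := by
  unfold score
  by_cases hvv : v ∈ mVerts va (r + 1)
  · simp [hvv]
  rw [if_neg hvv, if_neg (mt hv hvv),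
    ← (Sym2.map.injective Subtype.val_injective).encard_image]
  refine Set.encard_le_encard ?_
  rintro _ ⟨e, ⟨he, hve, hm⟩, rfl⟩
  exact ⟨(SimpleGraph.Embedding.induce V).map_mem_edgeSet_iff.2 he,
    Sym2.mem_map.2 ⟨v, hve, rfl⟩, hE e he hm⟩

section Lift

section VirtualAlice

variable [Nonempty V]

noncomputable def virtualMove (vs : List V) (x : V') : V :=
  choosePreferring {w | w ∉ vs} (if h : x ∈ V then ⟨x, h⟩ else Classical.arbitrary V)

noncomputable def virtualMoves (xs : List V') : List V :=
  xs.foldl (fun vs x => vs ++ [virtualMove vs x]) []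

noncomputable def virtualSeq (a : ℕ → V') (r : ℕ) : V :=
  virtualMove (virtualMoves (List.ofFn fun i : Fin r => a i)) (a r)

theorem virtualMoves_ofFn (a : ℕ → V') (r : ℕ) :
    virtualMoves (V := V) (List.ofFn fun i : Fin r => a i) =
      List.ofFn fun i : Fin r => virtualSeq a i := by
  induction r with
  | zero => rfl
  | succ r ih =>
    rw [ofFn_succ_eq_append a, ofFn_succ_eq_append (virtualSeq a), ← ih, virtualMoves,
      List.foldl_append]
    rfl

theorem aliceLegal_virtualSeq (a : ℕ → V') : AliceLegal (virtualSeq (V := V) a) :=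
  aliceLegal_of_eq_choosePreferring _ fun r => by
    rw [virtualSeq, virtualMove, virtualMoves_ofFn]

theorem mem_mVerts_virtualSeq {a : ℕ → V'} {r : ℕ} {v : V} (h : (v : V') ∈ mVerts a r) :
    v ∈ mVerts (virtualSeq a) r := by
  obtain ⟨i, hi, hav⟩ := h
  by_cases hv : v ∈ mVerts (virtualSeq a) i
  · exact mVerts_mono _ hi.le hv
  refine ⟨i, hi, ?_⟩
  rw [virtualSeq, virtualMove, hav, dif_pos v.2, virtualMoves_ofFn]
  exact choosePreferring_of_mem ((mem_ofFn_iff _ i v).not.2 hv)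

end VirtualAlice

variable (G') in
noncomputable def liftedRule [Nonempty V] (B : List V → Sym2 V) (xs : List V')
    (es : List (Sym2 V')) : Sym2 V' :=
  choosePreferring {e | e ∈ G'.edgeSet ∧ e ∉ es} ((B (virtualMoves xs)).map Subtype.val)

theorem BobWins.of_induce {s : ℕ} (h : BobWins (G'.induce V) s) : BobWins G' s := by
  obtain ⟨B, -, hB⟩ := h
  have : Nonempty V := ⟨(B []).out.1⟩
  refine ⟨bobOfRule (liftedRule G' B),
    fun a b hab _ => bobLegal_of_eq_choosePreferring _ hab.eq_rule, fun a b hab _ => ?_⟩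
  obtain ⟨r, v, hv⟩ := hB (virtualSeq a)
    (fun r => B (List.ofFn fun i : Fin (r + 1) => virtualSeq a i)) (fun _ => rfl)
    (aliceLegal_virtualSeq a)
  refine ⟨r, v, hv.trans (score_induce_le mem_mVerts_virtualSeq ?_)⟩
  rintro e he ⟨i, hi, rfl⟩
  by_cases hm :
    (B (List.ofFn fun j : Fin (i + 1) => virtualSeq a j)).map Subtype.val ∈ mEdges b i
  · exact mEdges_mono b hi.le hm
  refine ⟨i, hi, ?_⟩
  rw [hab.eq_rule i, liftedRule, virtualMoves_ofFn]
  exact choosePreferring_of_mem ⟨(SimpleGraph.Embedding.induce V).map_mem_edgeSet_iff.2 he,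
    (mem_ofFn_iff b i _).not.2 hm⟩

end Lift

section Defence

variable (G') in
noncomputable def pushInduced (acc : List (Sym2 V)) (e : Sym2 V') : List (Sym2 V) :=
  if h : ∃ e' ∈ (G'.induce V).edgeSet, e'.map Subtype.val = e ∧ e' ∉ acc then
    acc ++ [h.choose]
  else acc

variable (G' V) in
noncomputable def inducedMoves (es : List (Sym2 V')) : List (Sym2 V) :=
  es.foldl (pushInduced G') []

variable (G' V) in
noncomputable def inducedMovesUpTo (b : ℕ → Sym2 V') (r : ℕ) : List (Sym2 V) :=
  inducedMoves G' V (List.ofFn fun i : Fin r => b i)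

theorem pushInduced_eq_or (acc : List (Sym2 V)) (e : Sym2 V') :
    pushInduced G' acc e = acc ∨
      ∃ e' : Sym2 V, e'.map Subtype.val = e ∧ pushInduced G' acc e = acc ++ [e'] := by
  unfold pushInduced
  split_ifs with h
  · exact Or.inr ⟨h.choose, h.choose_spec.2.1, rfl⟩
  · exact Or.inl rfl

theorem mem_pushInduced {acc : List (Sym2 V)} {e : Sym2 V'} {e' : Sym2 V} :
    e' ∈ pushInduced G' acc e ↔
      e' ∈ acc ∨ e' ∈ (G'.induce V).edgeSet ∧ e'.map Subtype.val = e := by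
  unfold pushInduced
  split_ifs with h
  · rw [List.mem_append, List.mem_singleton]
    refine ⟨Or.imp_right fun h' => h' ▸ ⟨h.choose_spec.1, h.choose_spec.2.1⟩,
      Or.imp_right fun h' => ?_⟩
    exact Sym2.map.injective Subtype.val_injective (h'.2.trans h.choose_spec.2.1.symm)
  · refine ⟨Or.inl, Or.rec id fun h' => ?_⟩
    by_contra hacc
    exact h ⟨e', h'.1, h'.2, hacc⟩

theorem inducedMoves_append (es : List (Sym2 V')) (e : Sym2 V') :
    inducedMoves G' V (es ++ [e]) = pushInduced G' (inducedMoves G' V es) e := by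
  rw [inducedMoves, List.foldl_append]
  rfl

theorem mem_inducedMoves {es : List (Sym2 V')} {e' : Sym2 V} :
    e' ∈ inducedMoves G' V es ↔ e' ∈ (G'.induce V).edgeSet ∧ e'.map Subtype.val ∈ es := by
  induction es using List.reverseRecOn with
  | nil => simp [inducedMoves]
  | append_singleton es e ih =>
    rw [inducedMoves_append, mem_pushInduced, ih, List.mem_append, List.mem_singleton]
    tauto

theorem inducedMovesUpTo_succ (b : ℕ → Sym2 V') (r : ℕ) :
    inducedMovesUpTo G' V b (r + 1) = pushInduced G' (inducedMovesUpTo G' V b r) (b r) := by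
  rw [inducedMovesUpTo, ofFn_succ_eq_append, inducedMoves_append, inducedMovesUpTo]

theorem inducedMovesUpTo_prefix_succ (b : ℕ → Sym2 V') (r : ℕ) :
    inducedMovesUpTo G' V b r <+: inducedMovesUpTo G' V b (r + 1) := by
  rw [inducedMovesUpTo_succ]
  rcases pushInduced_eq_or (G' := G') (inducedMovesUpTo G' V b r) (b r) with h | ⟨e, -, h⟩ <;>
    simp [h]

theorem length_inducedMovesUpTo_succ_le (b : ℕ → Sym2 V') (r : ℕ) :
    (inducedMovesUpTo G' V b (r + 1)).length ≤ (inducedMovesUpTo G' V b r).length + 1 := by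
  rw [inducedMovesUpTo_succ]
  rcases pushInduced_eq_or (G' := G') (inducedMovesUpTo G' V b r) (b r) with h | ⟨e, -, h⟩ <;>
    simp [h]

theorem nodup_inducedMoves (es : List (Sym2 V')) : (inducedMoves G' V es).Nodup := by
  induction es using List.reverseRecOn with
  | nil => exact List.nodup_nil
  | append_singleton es e ih =>
    rw [inducedMoves_append]
    unfold pushInduced
    split_ifs with h
    · refine List.nodup_append.2 ⟨ih, List.nodup_singleton _, fun x hx y hy => ?_⟩
      rw [List.mem_singleton.1 hy]
      exact ne_of_mem_of_not_mem hx h.choose_spec.2.2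
    · exact ih

variable (G') in
noncomputable def defenceRule (A : List (Sym2 V) → V) (xs : List V') (es : List (Sym2 V')) :
    V' :=
  choosePreferring {x | x ∉ xs}
    (if h : ∃ x ∈ V, x ∉ xs ∧ ∃ y ∉ V, es.getLast? = some s(x, y) then h.choose
      else A (inducedMoves G' V es))

variable {A : List (Sym2 V) → V}

theorem defenceRule_nil : defenceRule G' A [] [] = A [] := by
  rw [defenceRule, dif_neg (by simp)]
  exact choosePreferring_of_mem List.not_mem_nil

theorem defenceRule_append_map (xs : List V') (es : List (Sym2 V')) (e : Sym2 V) :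
    defenceRule G' A xs (es ++ [e.map Subtype.val]) =
      choosePreferring {x | x ∉ xs} (A (inducedMoves G' V (es ++ [e.map Subtype.val]))) := by
  rw [defenceRule, dif_neg]
  rintro ⟨x, -, -, y, hy, h⟩
  rw [List.getLast?_concat, Option.some_inj] at h
  obtain ⟨u, -, rfl⟩ := Sym2.mem_map.1 (h ▸ Sym2.mem_mk_right x y)
  exact hy u.2

theorem defenceRule_append_cross {xs : List V'} (es : List (Sym2 V')) {x y : V'} (hx : x ∈ V)
    (hxs : x ∉ xs) (hy : y ∉ V) : defenceRule G' A xs (es ++ [s(x, y)]) = x := by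
  have h : ∃ u ∈ V, u ∉ xs ∧ ∃ w ∉ V, (es ++ [s(x, y)]).getLast? = some s(u, w) :=
    ⟨x, hx, hxs, y, hy, List.getLast?_concat⟩
  rw [defenceRule, dif_pos h]
  obtain ⟨-, -, y', hy', h'⟩ := h.choose_spec
  have : h.choose = x := by
    rcases Sym2.eq_iff.1 (Option.some_injective _ (List.getLast?_concat.symm.trans h')) with
      ⟨hxc, -⟩ | ⟨hxy', -⟩
    · exact hxc.symm
    · exact absurd (hxy' ▸ hx) hy'
  rw [this]
  exact choosePreferring_of_mem hxs

section DefencePlay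

variable {a : ℕ → V'} {b : ℕ → Sym2 V'} (ha : FollowsRule (defenceRule G' A) a b)
include ha

theorem mem_mVerts_of_cross {i : ℕ} {x y : V'} (hb : b i = s(x, y)) (hx : x ∈ V)
    (hy : y ∉ V) :
    x ∈ mVerts a (i + 2) := by
  by_cases hxm : x ∈ mVerts a (i + 1)
  · exact mVerts_mono a (by omega) hxm
  refine ⟨i + 1, by omega, ?_⟩
  rw [ha, ofFn_succ_eq_append b, hb]
  exact defenceRule_append_cross _ hx ((mem_ofFn_iff a _ x).not.2 hxm) hy

theorem mem_mVerts_of_inducedMovesUpTo_ne {r : ℕ}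
    (h : inducedMovesUpTo G' V b (r + 1) ≠ inducedMovesUpTo G' V b r) :
    (A (inducedMovesUpTo G' V b (r + 1)) : V') ∈ mVerts a (r + 2) := by
  rw [inducedMovesUpTo_succ] at h
  obtain h' | ⟨e, he, -⟩ := pushInduced_eq_or (G' := G') (inducedMovesUpTo G' V b r) (b r)
  · exact absurd h' h
  by_cases hm : (A (inducedMovesUpTo G' V b (r + 1)) : V') ∈ mVerts a (r + 1)
  · exact mVerts_mono a (by omega) hm
  refine ⟨r + 1, by omega, ?_⟩
  rw [inducedMovesUpTo, ofFn_succ_eq_append b, ← he] at hm ⊢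
  rw [ha, ofFn_succ_eq_append b, ← he, defenceRule_append_map]
  exact choosePreferring_of_mem ((mem_ofFn_iff a _ _).not.2 hm)

theorem virtual_mem_mVerts {vb : ℕ → Sym2 V}
    (hvb : ∀ r, (List.ofFn fun i : Fin (inducedMovesUpTo G' V b r).length => vb i) =
      inducedMovesUpTo G' V b r)
    (r j : ℕ) (hj : j ≤ (inducedMovesUpTo G' V b r).length) :
    (A (List.ofFn fun i : Fin j => vb i) : V') ∈ mVerts a (r + 1) := by
  induction r generalizing j with
  | zero =>
    obtain rfl : j = 0 := by simpa [inducedMovesUpTo, inducedMoves] using hj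
    exact ⟨0, zero_lt_one, by rw [ha]; exact defenceRule_nil⟩
  | succ r ih =>
    by_cases hjr : j ≤ (inducedMovesUpTo G' V b r).length
    · exact mVerts_mono a (by omega) (ih j hjr)
    have hne : inducedMovesUpTo G' V b (r + 1) ≠ inducedMovesUpTo G' V b r :=
      fun h => hjr (h ▸ hj)
    have hlen := length_inducedMovesUpTo_succ_le (G' := G') (V := V) b r
    obtain rfl : j = (inducedMovesUpTo G' V b (r + 1)).length := by omega
    rw [hvb]
    exact mem_mVerts_of_inducedMovesUpTo_ne ha hne

theorem markedIncident_subset {vb : ℕ → Sym2 V}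
    (hvb : ∀ r, (List.ofFn fun i : Fin (inducedMovesUpTo G' V b r).length => vb i) =
      inducedMovesUpTo G' V b r)
    {r : ℕ} {v : V} (hv : (v : V') ∉ mVerts a (r + 1)) :
    {e | e ∈ G'.edgeSet ∧ (v : V') ∈ e ∧ e ∈ mEdges b (r + 1)} ⊆
      Sym2.map Subtype.val '' {e | e ∈ (G'.induce V).edgeSet ∧ v ∈ e ∧
        e ∈ mEdges vb (inducedMovesUpTo G' V b r).length} ∪ {b r} := by
  rintro e ⟨he, hve, i, hi, rfl⟩
  rcases Nat.lt_succ_iff_lt_or_eq.1 hi with hi | rfl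
  swap
  · exact Or.inr rfl
  left
  obtain ⟨y, hy⟩ := Sym2.mem_iff_exists.1 hve
  by_cases hyV : y ∈ V
  swap
  · exact absurd (mVerts_mono a (by omega) (mem_mVerts_of_cross ha hy v.2 hyV)) hv
  have hmap : s(v, ⟨y, hyV⟩).map Subtype.val = b i := by rw [hy]; rfl
  have he' : s(v, ⟨y, hyV⟩) ∈ (G'.induce V).edgeSet :=
    (SimpleGraph.Embedding.induce V).map_mem_edgeSet_iff.1 (hmap ▸ he)
  refine ⟨_, ⟨he', Sym2.mem_mk_left _ _, (mem_ofFn_iff vb _ _).1 ?_⟩, hmap⟩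
  rw [hvb, inducedMovesUpTo, mem_inducedMoves]
  exact ⟨he', (mem_ofFn_iff b r _).2 ⟨i, hi, hmap.symm⟩⟩

theorem score_le_of_followsRule_defenceRule {n : ℕ} (hn : 2 ≤ n)
    (hdeg : ∀ v ∉ V, (G'.neighborSet v).encard < (n : ℕ∞)) {vb : ℕ → Sym2 V}
    (hvb : ∀ r, (List.ofFn fun i : Fin (inducedMovesUpTo G' V b r).length => vb i) =
      inducedMovesUpTo G' V b r)
    (hA : ∀ r (v : V), v ∉ mVerts (fun j => A (List.ofFn fun i : Fin j => vb i)) (r + 1) →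
      {e | e ∈ (G'.induce V).edgeSet ∧ v ∈ e ∧ e ∈ mEdges vb r}.encard ≤
        ((n - 2 : ℕ) : ℕ∞))
    (r : ℕ) (v : V') : score G' a b r v ≤ ((n - 1 : ℕ) : ℕ∞) := by
  rw [score]
  split_ifs with hv
  · exact zero_le
  by_cases hvV : v ∈ V
  · lift v to V using hvV
    have hvirt : v ∉ mVerts (fun j => A (List.ofFn fun i : Fin j => vb i))
        ((inducedMovesUpTo G' V b r).length + 1) := by
      rintro ⟨j, hj, hjv⟩
      exact hv (hjv ▸ virtual_mem_mVerts ha hvb r j (by omega))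
    calc _ ≤ (Sym2.map Subtype.val '' {e | e ∈ (G'.induce V).edgeSet ∧ v ∈ e ∧
            e ∈ mEdges vb (inducedMovesUpTo G' V b r).length} ∪ {b r}).encard :=
          Set.encard_le_encard (markedIncident_subset ha hvb hv)
      _ ≤ ((n - 2 : ℕ) : ℕ∞) + 1 := by
          grw [Set.encard_union_le, Set.encard_singleton,
            (Sym2.map.injective Subtype.val_injective).encard_image, hA _ v hvirt]
      _ = ((n - 1 : ℕ) : ℕ∞) := by norm_cast; omega
  · have hlt := hdeg v hvV
    rw [show (n : ℕ∞) = ((n - 1 : ℕ) : ℕ∞) + 1 by norm_cast; omega,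
      ENat.lt_add_one_iff (ENat.natCast_ne_top _)] at hlt
    exact (encard_incident_le G' v _).trans hlt

end DefencePlay

theorem exists_play_score_le_of_aliceKeepsBelow {n : ℕ} (hn : 2 ≤ n)
    (hdeg : ∀ v ∉ V, (G'.neighborSet v).encard < (n : ℕ∞))
    (halice : AliceKeepsBelow (G'.induce V) n) (B : List V' → Sym2 V') :
    ∃ a b, ConsistentB B a b ∧ AliceLegal a ∧
      ∀ r v, score G' a b r v ≤ ((n - 1 : ℕ) : ℕ∞) := by
  obtain ⟨A, -, hA⟩ := halice
  have : Nonempty V := ⟨A []⟩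
  have ha := followsRule_play (defenceRule G' A) B
  set a := fun r => (play (defenceRule G' A) B r).1
  set b := fun r => (play (defenceRule G' A) B r).2
  obtain ⟨vb, hvb_legal, hvb⟩ := exists_bobLegal_extending (G := G'.induce V)
    (inducedMovesUpTo_prefix_succ b) (fun r => nodup_inducedMoves _)
    (fun r _ he => (mem_inducedMoves.1 he).1)
  exact ⟨a, b, consistentB_play _ B, aliceLegal_of_eq_choosePreferring _ ha,
    score_le_of_followsRule_defenceRule ha hn hdeg hvb (hA _ vb (fun _ => rfl) hvb_legal)⟩

end Defence

end VEGame

/-- Let `G'` be a graph, `V ⊆ V(G')`, and `G` the subgraph of `G'` induced on `V`.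
If every vertex outside `V` has degree `< n` in `G'`, `col_ve(G) = n`, and Alice has a
strategy on `G` leaving, at the end of each of her turns, no unmarked vertex incident to
more than `n − 2` marked edges, then `col_ve(G') = n`. -/
theorem colVE_extension {V' : Type*} (G' : SimpleGraph V') (V : Set V') (n : ℕ)
    (hdeg : ∀ v ∉ V, (G'.neighborSet v).encard < (n : ℕ∞))
    (hcol : colVE (G'.induce V) = (n : ℕ∞))
    (halice : AliceKeepsBelow (G'.induce V) n) :
    colVE G' = (n : ℕ∞) := by
  have hn : n ≠ 0 := by rintro rfl; exact colVE_ne_zero _ hcol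
  rw [← hcol]
  refine colVE_congr fun s hs => ⟨fun h => ?_, BobWins.of_induce⟩
  rw [bobWins_iff_lt_colVE hs, hcol]
  obtain rfl | hn2 : n = 1 ∨ 2 ≤ n := by omega
  · have hG : (G'.induce V).edgeSet = ∅ := by
      by_contra hne
      have h1 := (bobWins_iff_lt_colVE one_ne_zero).1
        (bobWins_one (Set.nonempty_iff_ne_empty.2 hne))
      simp [hcol] at h1
    have hout : ∀ v ∉ V, G'.neighborSet v = ∅ := fun v hv =>
      Set.encard_eq_zero.1 (Order.lt_one_iff.1 (by simpa using hdeg v hv))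
    exact absurd (h.eq_zero_of_edgeSet_eq_empty (edgeSet_eq_empty_of_induce hout hG)) hs
  · have := h.le_of_forall_exists_play (exists_play_score_le_of_aliceKeepsBelow hn2 hdeg halice)
    exact_mod_cast (by omega : s < n)
end

section
/- Let G be a simple graph and let n ∈ ℕ. Consider any position of the vertex-edge marking game on G with Bob to move (i.e., arising after Alice's move in some round of a play) in which there exists an n-free path. Then Bob has a strategy for the remainder of the game that forces the score of the play to be at least n+3. -/
open VEGame

namespace VEGame

variable {V : Type*}

open Classical

/-- The edges of the path with vertex sequence `v 0, …, v k`. -/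
def pathEdges (k : ℕ) (v : ℕ → V) : Set (Sym2 V) := {e | ∃ j < k, e = s(v j, v (j + 1))}

/-- An `n`-free path in a position (`MV` = marked vertices, `ME` = marked edges) of the
vertex-edge marking game on `G`: a path with vertex sequence `v 0, …, v k`, `k ≥ 2`,
whose first and last edges are marked, whose interior vertices are unmarked, and whose
every interior vertex is incident to at least `n + 1` edges not in the path, at least
`n` of which are marked. -/
def IsNFreePath (G : SimpleGraph V) (MV : Set V) (ME : Set (Sym2 V)) (n : ℕ)
    (k : ℕ) (v : ℕ → V) : Prop :=
  2 ≤ k ∧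
  (∀ i < k, G.Adj (v i) (v (i + 1))) ∧
  (∀ i ≤ k, ∀ j ≤ k, v i = v j → i = j) ∧
  s(v 0, v 1) ∈ ME ∧ s(v (k - 1), v k) ∈ ME ∧
  (∀ i, 0 < i → i < k → v i ∉ MV) ∧
  (∀ i, 0 < i → i < k →
    ((n : ℕ∞) + 1 ≤ {e | e ∈ G.edgeSet ∧ v i ∈ e ∧ e ∉ pathEdges k v}.encard ∧
      (n : ℕ∞) ≤ {e | e ∈ G.edgeSet ∧ e ∈ ME ∧ v i ∈ e ∧ e ∉ pathEdges k v}.encard))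

/-- The set of vertices marked after Alice's first `r` moves, starting from a position in
which the vertices in `MV` are already marked. -/
def mVertsFrom (MV : Set V) (a : ℕ → V) (r : ℕ) : Set V := MV ∪ {v | ∃ i < r, a i = v}

/-- The set of edges marked after Bob's first `r` moves, starting from a position in
which the edges in `ME` are already marked. -/
def mEdgesFrom (ME : Set (Sym2 V)) (b : ℕ → Sym2 V) (r : ℕ) : Set (Sym2 V) :=
  ME ∪ {e | ∃ i < r, b i = e}

/-- In the game continued from a position with Bob to move, the players alternate
`b 0, a 0, b 1, a 1, …`.  Alice's moves are legal: whenever an unmarked vertex remains,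
she marks a previously unmarked vertex. -/
def AliceLegalFrom (MV : Set V) (a : ℕ → V) : Prop :=
  ∀ r, (∃ v, v ∉ mVertsFrom MV a r) → a r ∉ mVertsFrom MV a r

/-- Bob's moves are legal: whenever an unmarked edge of `G` remains, he marks a
previously unmarked edge of `G`. -/
def BobLegalFrom (G : SimpleGraph V) (ME : Set (Sym2 V)) (b : ℕ → Sym2 V) : Prop :=
  ∀ r, (∃ e ∈ G.edgeSet, e ∉ mEdgesFrom ME b r) →
    b r ∈ G.edgeSet ∧ b r ∉ mEdgesFrom ME b r

/-- In the continued game (Bob to move first) the score of vertex `v` just after Bob's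
`r`-th move: `0` if `v` is marked, and otherwise the number of marked edges incident
to `v`. -/
noncomputable def scoreFrom (G : SimpleGraph V) (MV : Set V) (ME : Set (Sym2 V))
    (a : ℕ → V) (b : ℕ → Sym2 V) (r : ℕ) (v : V) : ℕ∞ :=
  if v ∈ mVertsFrom MV a r then 0
  else {e | e ∈ G.edgeSet ∧ v ∈ e ∧ e ∈ mEdgesFrom ME b (r + 1)}.encard

/-- `a` is the sequence of Alice's moves when she follows strategy `A` in the continued
game (Bob moving first in each round). -/
def ConsistentAFrom (A : List (Sym2 V) → V) (a : ℕ → V) (b : ℕ → Sym2 V) : Prop :=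
  ∀ r, a r = A (List.ofFn fun i : Fin (r + 1) => b i)

/-- `b` is the sequence of Bob's moves when he follows strategy `B` in the continued
game (Bob moving first in each round). -/
def ConsistentBFrom (B : List V → Sym2 V) (a : ℕ → V) (b : ℕ → Sym2 V) : Prop :=
  ∀ r, b r = B (List.ofFn fun i : Fin r => a i)

/-- Bob, moving first from the position (`MV`, `ME`), has a strategy for the remainder of
the game forcing the score of the play to reach at least `s`. -/
def BobWinsFrom (G : SimpleGraph V) (MV : Set V) (ME : Set (Sym2 V)) (s : ℕ) : Prop :=
  ∃ B : List V → Sym2 V,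
    (∀ a b, ConsistentBFrom B a b → AliceLegalFrom MV a → BobLegalFrom G ME b) ∧
    (∀ a b, ConsistentBFrom B a b → AliceLegalFrom MV a →
      ∃ r v, (s : ℕ∞) ≤ scoreFrom G MV ME a b r v)

end VEGame

/-!
Bob walks along the path. If the second path edge `v 1 v 2` is already marked, the unmarked
vertex `v 1` carries two marked path edges and at least `n` further marked edges, hence score
`n + 2`, and at least `n + 3` edges in all, so one more edge at `v 1` (or none, if all of them
are marked) brings it to `n + 3`. Otherwise Bob marks `v 1 v 2`. If Alice replies elsewhere,
`v 1` is in the situation just described. If she marks `v 1`, then `v 1, …, v k` is an `n`-free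
path one edge shorter in the new position, and Bob starts over; it has length at least `2`
because the last path edge was marked while `v 1 v 2` was not.
-/

namespace VEGame

variable {V : Type*}

lemma encard_sdiff_add_two_le {α : Type*} {T P : Set α} {x y : α} (hxy : x ≠ y)
    (hx : x ∈ T ∩ P) (hy : y ∈ T ∩ P) : (T \ P).encard + 2 ≤ T.encard := by
  rw [← Set.encard_sdiff_add_encard_inter T P, ← Set.encard_pair hxy]
  gcongr
  exact Set.pair_subset hx hy

section Positions

variable (G : SimpleGraph V) (MV : Set V) (ME : Set (Sym2 V)) (a : ℕ → V) (b : ℕ → Sym2 V)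

@[simp]
lemma mVertsFrom_zero : mVertsFrom MV a 0 = MV := by
  simp [mVertsFrom]

@[simp]
lemma mEdgesFrom_zero : mEdgesFrom ME b 0 = ME := by
  simp [mEdgesFrom]

lemma mEdgesFrom_succ (r : ℕ) : mEdgesFrom ME b (r + 1) = insert (b r) (mEdgesFrom ME b r) := by
  ext e
  simp only [mEdgesFrom, Set.mem_union, Set.mem_insert_iff, Set.mem_ofPred_eq,
    Nat.exists_lt_succ_right, @eq_comm _ e]
  exact or_rotate.symm

lemma mVertsFrom_tail (r : ℕ) :
    mVertsFrom (insert (a 0) MV) (fun i => a (i + 1)) r = mVertsFrom MV a (r + 1) := by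
  ext x
  simp only [mVertsFrom, Set.mem_union, Set.mem_insert_iff, Set.mem_ofPred_eq,
    Nat.exists_lt_succ_left]
  tauto

lemma mEdgesFrom_tail (r : ℕ) :
    mEdgesFrom (insert (b 0) ME) (fun i => b (i + 1)) r = mEdgesFrom ME b (r + 1) := by
  ext e
  simp only [mEdgesFrom, Set.mem_union, Set.mem_insert_iff, Set.mem_ofPred_eq,
    Nat.exists_lt_succ_left]
  tauto

lemma scoreFrom_tail (r : ℕ) (u : V) :
    scoreFrom G (insert (a 0) MV) (insert (b 0) ME) (fun i => a (i + 1)) (fun i => b (i + 1)) r u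
      = scoreFrom G MV ME a b (r + 1) u := by
  rw [scoreFrom, scoreFrom, mVertsFrom_tail, mEdgesFrom_tail]

variable {G MV ME a b}

lemma scoreFrom_of_notMem {r : ℕ} {u : V} (hu : u ∉ mVertsFrom MV a r) :
    scoreFrom G MV ME a b r u = (G.incidenceSet u ∩ mEdgesFrom ME b (r + 1)).encard := by
  rw [scoreFrom, if_neg hu]
  congr 1
  ext e
  simp only [SimpleGraph.incidenceSet, Set.mem_inter_iff, Set.mem_ofPred_eq, and_assoc]

lemma AliceLegalFrom.tail (h : AliceLegalFrom MV a) :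
    AliceLegalFrom (insert (a 0) MV) (fun i => a (i + 1)) := by
  intro r
  simpa only [mVertsFrom_tail] using h (r + 1)

lemma BobLegalFrom.of_tail (h0 : b 0 ∈ G.edgeSet ∧ b 0 ∉ ME)
    (h : BobLegalFrom G (insert (b 0) ME) (fun i => b (i + 1))) : BobLegalFrom G ME b := by
  rintro (_ | r) hr
  · simpa using h0
  · rw [← mEdgesFrom_tail] at hr ⊢
    exact h r hr

end Positions

section Strategies

variable {G : SimpleGraph V} {MV : Set V} {ME : Set (Sym2 V)}

def openWith (e : Sym2 V) (B : V → List V → Sym2 V) : List V → Sym2 V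
  | [] => e
  | x :: l => B x l

lemma ConsistentBFrom.of_openWith {e : Sym2 V} {B : V → List V → Sym2 V} {a : ℕ → V}
    {b : ℕ → Sym2 V} (h : ConsistentBFrom (openWith e B) a b) :
    b 0 = e ∧ ConsistentBFrom (B (a 0)) (fun i => a (i + 1)) (fun i => b (i + 1)) :=
  ⟨h 0, fun r => by simpa [List.ofFn_succ, openWith] using h (r + 1)⟩

theorem bobWinsFrom_of_forall_reply {s : ℕ} {e : Sym2 V} (he : e ∈ G.edgeSet ∧ e ∉ ME)
    (h : ∀ x, BobWinsFrom G (insert x MV) (insert e ME) s) : BobWinsFrom G MV ME s := by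
  choose B hlegal hwin using h
  refine ⟨openWith e B, fun a b hab ha => ?_, fun a b hab ha => ?_⟩
  · obtain ⟨rfl, hab'⟩ := hab.of_openWith
    exact .of_tail he (hlegal _ _ _ hab' ha.tail)
  · obtain ⟨rfl, hab'⟩ := hab.of_openWith
    obtain ⟨r, u, hr⟩ := hwin _ _ _ hab' ha.tail
    exact ⟨r + 1, u, by rwa [scoreFrom_tail] at hr⟩

/-- A strategy sees only Alice's moves, but Bob can recompute his own moves from them. -/
lemma exists_consistentBFrom_eq_rule (ME : Set (Sym2 V)) (f : Set (Sym2 V) → Sym2 V) :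
    ∃ B : List V → Sym2 V, ∀ a b, ConsistentBFrom B a b → ∀ r, b r = f (mEdgesFrom ME b r) := by
  let M : ℕ → Set (Sym2 V) := fun r => Nat.rec ME (fun _ E => insert (f E) E) r
  refine ⟨fun l => f (M l.length), fun a b hab => ?_⟩
  have hb : ∀ r, b r = f (M r) := fun r => by
    rw [hab r]
    dsimp only
    rw [List.length_ofFn]
  have hM : ∀ r, mEdgesFrom ME b r = M r := by
    intro r
    induction r with
    | zero => simp [M]
    | succ r ih => rw [mEdgesFrom_succ, ih, hb]
  intro r
  rw [hM, hb]

open Classical in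
noncomputable def greedyEdge (G : SimpleGraph V) (u : V) (E : Set (Sym2 V)) : Sym2 V :=
  if h : (G.incidenceSet u \ E).Nonempty then h.some
  else if h' : (G.edgeSet \ E).Nonempty then h'.some else s(u, u)

lemma greedyEdge_mem_incidenceSet {u : V} {E : Set (Sym2 V)}
    (h : (G.incidenceSet u \ E).Nonempty) : greedyEdge G u E ∈ G.incidenceSet u \ E := by
  rw [greedyEdge, dif_pos h]
  exact h.some_mem

lemma greedyEdge_mem_edgeSet {u : V} {E : Set (Sym2 V)} (h : (G.edgeSet \ E).Nonempty) :
    greedyEdge G u E ∈ G.edgeSet \ E := by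
  by_cases hu : (G.incidenceSet u \ E).Nonempty
  · exact Set.sdiff_subset_sdiff_left (G.incidenceSet_subset u) (greedyEdge_mem_incidenceSet hu)
  · rw [greedyEdge, dif_neg hu, dif_pos h]
    exact h.some_mem

theorem bobWinsFrom_of_le_encard {s : ℕ} {u : V} (hu : u ∉ MV)
    (hdeg : (s : ℕ∞) ≤ (G.incidenceSet u).encard)
    (hmarked : (s : ℕ∞) ≤ (G.incidenceSet u ∩ ME).encard + 1) : BobWinsFrom G MV ME s := by
  obtain ⟨B, hB⟩ := exists_consistentBFrom_eq_rule ME (greedyEdge G u)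
  refine ⟨B, fun a b hab _ r hr => ?_, fun a b hab _ => ⟨0, u, ?_⟩⟩
  · rw [hB a b hab r]
    exact greedyEdge_mem_edgeSet hr
  have hb0 : b 0 = greedyEdge G u ME := by simpa using hB a b hab 0
  rw [scoreFrom_of_notMem (by simpa using hu), mEdgesFrom_succ, mEdgesFrom_zero]
  by_cases h : (G.incidenceSet u \ ME).Nonempty
  · have hb : b 0 ∈ G.incidenceSet u \ ME := hb0 ▸ greedyEdge_mem_incidenceSet h
    rwa [Set.inter_insert_of_mem hb.1, Set.encard_insert_of_notMem fun h' => hb.2 h'.2]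
  · have hsub : G.incidenceSet u ⊆ ME :=
      Set.sdiff_eq_empty.mp (Set.not_nonempty_iff_eq_empty.mp h)
    exact hdeg.trans (Set.encard_le_encard fun e he => ⟨he, Or.inr (hsub he)⟩)

end Strategies

namespace IsNFreePath

variable {G : SimpleGraph V} {MV : Set V} {ME : Set (Sym2 V)} {n k : ℕ} {v : ℕ → V}

lemma one_lt (hp : IsNFreePath G MV ME n k v) : 1 < k :=
  hp.1

lemma snd_notMem (hp : IsNFreePath G MV ME n k v) : v 1 ∉ MV :=
  hp.2.2.2.2.2.1 1 one_pos hp.one_lt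

lemma adj_fst (hp : IsNFreePath G MV ME n k v) : G.Adj (v 0) (v 1) :=
  hp.2.1 0 (zero_lt_one.trans hp.one_lt)

lemma adj_snd (hp : IsNFreePath G MV ME n k v) : G.Adj (v 1) (v 2) :=
  hp.2.1 1 hp.one_lt

lemma encard_sdiff_pathEdges_add_two_le (hp : IsNFreePath G MV ME n k v) {T : Set (Sym2 V)}
    (h01 : s(v 0, v 1) ∈ T) (h12 : s(v 1, v 2) ∈ T) :
    (T \ pathEdges k v).encard + 2 ≤ T.encard := by
  obtain ⟨hk, -, hinj, -⟩ := hp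
  have hne : s(v 0, v 1) ≠ s(v 1, v 2) := by
    intro h
    rcases Sym2.eq_iff.mp h with ⟨h, -⟩ | ⟨h, -⟩
    · exact absurd (hinj 0 (by omega) 1 (by omega) h) (by omega)
    · exact absurd (hinj 0 (by omega) 2 hk h) (by omega)
  exact encard_sdiff_add_two_le hne ⟨h01, 0, by omega, rfl⟩ ⟨h12, 1, by omega, rfl⟩

lemma le_encard_incidenceSet (hp : IsNFreePath G MV ME n k v) :
    ((n + 3 : ℕ) : ℕ∞) ≤ (G.incidenceSet (v 1)).encard := by
  have hoff := (hp.2.2.2.2.2.2 1 one_pos hp.one_lt).1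
  calc ((n + 3 : ℕ) : ℕ∞) = (n + 1 : ℕ∞) + 2 := by push_cast; ring
    _ ≤ (G.incidenceSet (v 1) \ pathEdges k v).encard + 2 := by
        gcongr
        exact hoff.trans (Set.encard_le_encard fun e he => ⟨⟨he.1, he.2.1⟩, he.2.2⟩)
    _ ≤ _ := hp.encard_sdiff_pathEdges_add_two_le
        ((G.mk'_mem_incidenceSet_right_iff).mpr hp.adj_fst)
        ((G.mk'_mem_incidenceSet_left_iff).mpr hp.adj_snd)

lemma le_encard_incidenceSet_inter_add_one (hp : IsNFreePath G MV ME n k v)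
    {ME' : Set (Sym2 V)} (hME' : ME ⊆ ME') (h12 : s(v 1, v 2) ∈ ME') :
    ((n + 3 : ℕ) : ℕ∞) ≤ (G.incidenceSet (v 1) ∩ ME').encard + 1 := by
  have hoff := (hp.2.2.2.2.2.2 1 one_pos hp.one_lt).2
  calc ((n + 3 : ℕ) : ℕ∞) = (n : ℕ∞) + 2 + 1 := by push_cast; ring
    _ ≤ ((G.incidenceSet (v 1) ∩ ME') \ pathEdges k v).encard + 2 + 1 := by
        gcongr
        exact hoff.trans (Set.encard_le_encard fun e he =>
          ⟨⟨⟨he.1, he.2.2.1⟩, hME' he.2.1⟩, he.2.2.2⟩)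
    _ ≤ _ := by
        gcongr
        exact hp.encard_sdiff_pathEdges_add_two_le
          ⟨(G.mk'_mem_incidenceSet_right_iff).mpr hp.adj_fst,
            hME' hp.2.2.2.1⟩
          ⟨(G.mk'_mem_incidenceSet_left_iff).mpr hp.adj_snd, h12⟩

lemma tail (hp : IsNFreePath G MV ME n k v) (h12 : s(v 1, v 2) ∉ ME) :
    IsNFreePath G (insert (v 1) MV) (insert s(v 1, v 2) ME) n (k - 1) (fun i => v (i + 1)) := by
  obtain ⟨hk, hadj, hinj, -, hlast, hunm, hcnt⟩ := hp
  have hk3 : 3 ≤ k := by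
    by_contra hk3
    obtain rfl : k = 2 := by omega
    exact h12 hlast
  have hsub : pathEdges (k - 1) (fun i => v (i + 1)) ⊆ pathEdges k v := by
    rintro e ⟨j, hj, rfl⟩
    exact ⟨j + 1, by omega, rfl⟩
  refine ⟨by omega, fun i hi => hadj (i + 1) (by omega), fun i hi j hj h => ?_,
    Set.mem_insert _ _, ?_, fun i hi0 hik => ?_, fun i hi0 hik => ?_⟩
  · have := hinj (i + 1) (by omega) (j + 1) (by omega) h
    omega
  · show s(v (k - 1 - 1 + 1), v (k - 1 + 1)) ∈ _
    rw [show k - 1 - 1 + 1 = k - 1 by omega, show k - 1 + 1 = k by omega]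
    exact Set.mem_insert_of_mem _ hlast
  · rintro (h | h)
    · have := hinj (i + 1) (by omega) 1 (by omega) h
      omega
    · exact hunm (i + 1) (by omega) (by omega) h
  · obtain ⟨hoff, hoffMarked⟩ := hcnt (i + 1) (by omega) (by omega)
    exact ⟨hoff.trans (Set.encard_le_encard fun e ⟨h1, h2, h3⟩ =>
        ⟨h1, h2, fun h => h3 (hsub h)⟩),
      hoffMarked.trans (Set.encard_le_encard fun e ⟨h1, h2, h3, h4⟩ =>
        ⟨h1, Set.mem_insert_of_mem _ h2, h3, fun h => h4 (hsub h)⟩)⟩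

end IsNFreePath

end VEGame

theorem bobWins_of_nFreePath_general {V : Type*} (G : SimpleGraph V) (n : ℕ)
    (MV : Set V) (ME : Set (Sym2 V))
    (k : ℕ) (v : ℕ → V) (hpath : IsNFreePath G MV ME n k v) :
    BobWinsFrom G MV ME (n + 3) := by
  induction k using Nat.strong_induction_on generalizing MV ME v with
  | _ k ih =>
  by_cases h12 : s(v 1, v 2) ∈ ME
  · exact bobWinsFrom_of_le_encard hpath.snd_notMem hpath.le_encard_incidenceSet
      (hpath.le_encard_incidenceSet_inter_add_one subset_rfl h12)
  refine bobWinsFrom_of_forall_reply ⟨hpath.adj_snd, h12⟩ fun x => ?_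
  by_cases hx : x = v 1
  · subst hx
    exact ih (k - 1) (by have := hpath.one_lt; omega) _ _ _ (hpath.tail h12)
  · exact bobWinsFrom_of_le_encard (by simp [Ne.symm hx, hpath.snd_notMem])
      hpath.le_encard_incidenceSet
      (hpath.le_encard_incidenceSet_inter_add_one (Set.subset_insert _ _) (Set.mem_insert _ _))

/-- If, in a position of the vertex-edge marking game on `G` with Bob to move, there is an
`n`-free path, then Bob has a strategy for the remainder of the game forcing the score of
the play to be at least `n + 3`. -/
theorem bobWins_of_nFreePath {V : Type*} (G : SimpleGraph V) (n : ℕ)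
    (MV : Set V) (ME : Set (Sym2 V)) (hME : ME ⊆ G.edgeSet)
    (k : ℕ) (v : ℕ → V) (hpath : IsNFreePath G MV ME n k v) :
    BobWinsFrom G MV ME (n + 3) :=
  bobWins_of_nFreePath_general G n MV ME k v hpath
end

section
/- Let G be a simple graph and d ∈ ℕ. If the edges of G can be oriented so that every vertex has out-degree at most d (i.e., G has a d-bounded orientation), then col_ve(G) ≤ d+2. -/
open VEGame

/-!
Alice answers each edge `e` that Bob marks by marking its head, or an arbitrary unmarked vertex
if the head is already marked. An unmarked vertex `v` then never carries a marked edge with head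
`v` except the one Bob marked in the current round, so its score is at most its out-degree plus
one.
-/

namespace VEGame

variable {V : Type*}

section Strategy

open Classical in
noncomputable def pickUnmarked (S : Set V) (t : V) : V :=
  if t ∉ S then t else if h : ∃ v, v ∉ S then h.choose else t

lemma pickUnmarked_of_notMem {S : Set V} {t : V} (ht : t ∉ S) : pickUnmarked S t = t := by
  classical
  simp only [pickUnmarked, if_pos ht]

lemma pickUnmarked_notMem {S : Set V} (t : V) (h : ∃ v, v ∉ S) : pickUnmarked S t ∉ S := by
  classical
  by_cases ht : t ∈ S
  · simpa only [pickUnmarked, ht, not_true_eq_false, if_false, dif_pos h] using h.choose_spec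
  · rwa [pickUnmarked_of_notMem ht]

def responses (B : List V → Sym2 V) (a : ℕ → V) : ℕ → Sym2 V :=
  fun r => B (List.ofFn fun i : Fin (r + 1) => a i)

lemma consistentB_responses (B : List V → Sym2 V) (a : ℕ → V) :
    ConsistentB B a (responses B a) :=
  fun _ => rfl

/-- In round `r + 1` Alice targets the head of Bob's move of round `r`, which is
`head (B [a 0, …, a r])`; in round `0` the target `head (B [])` is just some vertex. -/
noncomputable def chaseHeads (B : List V → Sym2 V) (head : Sym2 V → V) (r : ℕ) : V :=
  pickUnmarked {v | ∃ i, ∃ _ : i < r, chaseHeads B head i = v}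
    (head (B (List.ofFn fun i : Fin r => chaseHeads B head i)))
termination_by r
decreasing_by all_goals omega

variable (B : List V → Sym2 V) (head : Sym2 V → V)

lemma chaseHeads_eq (r : ℕ) :
    chaseHeads B head r = pickUnmarked (mVerts (chaseHeads B head) r)
      (head (B (List.ofFn fun i : Fin r => chaseHeads B head i))) := by
  rw [chaseHeads]
  simp only [mVerts, exists_prop]

lemma aliceLegal_chaseHeads : AliceLegal (chaseHeads B head) := by
  intro r hr
  rw [chaseHeads_eq]
  exact pickUnmarked_notMem _ hr

lemma head_responses_mem_mVerts_chaseHeads (i : ℕ) :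
    head (responses B (chaseHeads B head) i) ∈ mVerts (chaseHeads B head) (i + 2) := by
  by_cases hmarked : head (responses B (chaseHeads B head) i) ∈ mVerts (chaseHeads B head) (i + 1)
  · obtain ⟨j, hj, hj_eq⟩ := hmarked
    exact ⟨j, by omega, hj_eq⟩
  · refine ⟨i + 1, by omega, ?_⟩
    rw [chaseHeads_eq]
    exact pickUnmarked_of_notMem hmarked

end Strategy

lemma score_le_of_head_mem_mVerts (G : SimpleGraph V) (d : ℕ) (head : Sym2 V → V)
    (hout : ∀ v : V, {e | e ∈ G.edgeSet ∧ v ∈ e ∧ head e ≠ v}.encard ≤ (d : ℕ∞))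
    (a : ℕ → V) (b : ℕ → Sym2 V) (hmarked : ∀ i, head (b i) ∈ mVerts a (i + 2)) (r : ℕ) (v : V) :
    score G a b r v ≤ (d : ℕ∞) + 1 := by
  unfold score
  split_ifs with hv
  · exact zero_le
  have hsub : {e | e ∈ G.edgeSet ∧ v ∈ e ∧ e ∈ mEdges b (r + 1)} ⊆
      {e | e ∈ G.edgeSet ∧ v ∈ e ∧ head e ≠ v} ∪ {b r} := by
    rintro e ⟨he, hve, i, hi, rfl⟩
    by_cases hhead : head (b i) = v
    · have hir : i = r := by
        by_contra hne
        obtain ⟨j, hj, hj_eq⟩ := hmarked i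
        exact hv ⟨j, by omega, hj_eq.trans hhead⟩
      exact Or.inr (hir ▸ rfl)
    · exact Or.inl ⟨he, hve, hhead⟩
  calc {e | e ∈ G.edgeSet ∧ v ∈ e ∧ e ∈ mEdges b (r + 1)}.encard
      ≤ ({e | e ∈ G.edgeSet ∧ v ∈ e ∧ head e ≠ v} ∪ {b r}).encard := Set.encard_le_encard hsub
    _ ≤ {e | e ∈ G.edgeSet ∧ v ∈ e ∧ head e ≠ v}.encard + ({b r} : Set (Sym2 V)).encard :=
      Set.encard_union_le _ _
    _ ≤ (d : ℕ∞) + 1 := by rw [Set.encard_singleton]; exact add_le_add_left (hout v) 1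

lemma le_of_bobWins (G : SimpleGraph V) (d : ℕ) (head : Sym2 V → V)
    (hout : ∀ v : V, {e | e ∈ G.edgeSet ∧ v ∈ e ∧ head e ≠ v}.encard ≤ (d : ℕ∞))
    {s : ℕ} (hs : BobWins G s) : (s : ℕ∞) ≤ (d : ℕ∞) + 1 := by
  obtain ⟨B, -, hforce⟩ := hs
  obtain ⟨r, v, hscore⟩ := hforce _ _ (consistentB_responses B (chaseHeads B head))
    (aliceLegal_chaseHeads B head)
  exact hscore.trans (score_le_of_head_mem_mVerts G d head hout _ _
    (head_responses_mem_mVerts_chaseHeads B head) r v)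

end VEGame

theorem colVE_le_of_bounded_orientation_general {V : Type*} (G : SimpleGraph V) (d : ℕ)
    (head : Sym2 V → V)
    (hout : ∀ v : V, {e | e ∈ G.edgeSet ∧ v ∈ e ∧ head e ≠ v}.encard ≤ (d : ℕ∞)) :
    colVE G ≤ (d : ℕ∞) + 2 := by
  have hsup : (⨆ s ∈ {s : ℕ | BobWins G s}, (s : ℕ∞)) ≤ (d : ℕ∞) + 1 :=
    iSup₂_le fun _ hs => le_of_bobWins G d head hout hs
  calc colVE G ≤ ((d : ℕ∞) + 1) + 1 := add_le_add_left hsup 1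
    _ = (d : ℕ∞) + 2 := by ring

/-- If the edges of `G` can be oriented (each edge `e` being assigned a head `head e ∈ e`)
so that every vertex has out-degree at most `d`, then `col_ve(G) ≤ d + 2`. -/
theorem colVE_le_of_bounded_orientation {V : Type*} (G : SimpleGraph V) (d : ℕ)
    (head : Sym2 V → V)
    (hhead : ∀ e ∈ G.edgeSet, head e ∈ e)
    (hout : ∀ v : V, {e | e ∈ G.edgeSet ∧ v ∈ e ∧ head e ≠ v}.encard ≤ (d : ℕ∞)) :
    colVE G ≤ (d : ℕ∞) + 2 :=
  colVE_le_of_bounded_orientation_general G d head hout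
end
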